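/- arXiv:1901.03734 — 6 statements merged into one kernel-verified Lean document; each statement's English description precedes it below -/
import Mathlib

section
/- For any r, the almost Riordan array A_r = ((1+x(r-1))/(1-x); 1/(1-x)^2, x/(1-x)) is a pseudo-involution in the group of almost Riordan arrays of order 1: its inverse equals (1 - rx/(1+x); 1/(1+x)^2, x/(1+x)), which is obtained from A_r by the sign change a(x) ↦ a(-x), g(x) ↦ g(-x), f(x) ↦ -f(-x). -/
open PowerSeries

/-- Composition f ∘ g of formal power series (intended for g with zero constant term). -/
noncomputable def comp (f g : ℚ⟦X⟧) : ℚ⟦X⟧ :=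
  PowerSeries.mk fun n => ∑ k ∈ Finset.range (n + 1),
    PowerSeries.coeff k f * PowerSeries.coeff n (g ^ k)

/-- (f(x) - f(0))/x. -/
noncomputable def shift (f : ℚ⟦X⟧) : ℚ⟦X⟧ := PowerSeries.mk fun n => PowerSeries.coeff (n + 1) f

/-- Action of the almost Riordan array (a; g, f) on a power series b. -/
noncomputable def aact (a g f b : ℚ⟦X⟧) : ℚ⟦X⟧ :=
  PowerSeries.C (PowerSeries.constantCoeff b) * a + PowerSeries.X * g * comp (shift b) f

/-- Product in the group of almost Riordan arrays of order 1 (triples (a; g, f)). -/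
noncomputable def amul (M N : ℚ⟦X⟧ × ℚ⟦X⟧ × ℚ⟦X⟧) : ℚ⟦X⟧ × ℚ⟦X⟧ × ℚ⟦X⟧ :=
  (aact M.1 M.2.1 M.2.2 N.1, M.2.1 * comp N.2.1 M.2.2, comp N.2.2 M.2.2)

/-- Product in the Riordan group (pairs (g, f)). -/
noncomputable def rmul (M N : ℚ⟦X⟧ × ℚ⟦X⟧) : ℚ⟦X⟧ × ℚ⟦X⟧ :=
  (M.1 * comp N.1 M.2, comp N.2 M.2)

/-!
The Riordan parts `((1 - b x)⁻², x / (1 - b x))` form a one-parameter group, because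
`x / (1 - a x)` composed with `x / (1 - b x)` is `x / (1 - (a + b) x)`; `A_r` and its sign
change are the parameters `b = 1` and `b = -1`. Their `a`-parts are `1 + r x / (1 - x)` and
`1 - r x / (1 + x)`, and in either product the term `x g (b̃ ∘ f)` contributed by the second
factor is exactly minus the `x`-term of the first factor's `a`-part.
-/

section

variable {k : Type*} [Field k]

theorem map_inv_of_constantCoeff_ne_zero {F : Type*} [FunLike F k⟦X⟧ k⟦X⟧]
    [RingHomClass F k⟦X⟧ k⟦X⟧] (φ : F) {w : k⟦X⟧} (hw : constantCoeff w ≠ 0) :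
    φ w⁻¹ = (φ w)⁻¹ := by
  have h : φ w⁻¹ * φ w = 1 := by rw [← map_mul, PowerSeries.inv_mul_cancel _ hw, map_one]
  have hφw : constantCoeff (φ w) ≠ 0 :=
    right_ne_zero_of_mul_eq_one (by rw [← map_mul, h, map_one])
  exact (eq_inv_iff_mul_eq_one hφw).mpr h

theorem rescale_C (c a : k) : rescale c (C a) = C a := by
  ext n
  cases n <;> simp [coeff_rescale, coeff_C]

theorem rescale_inv_one_sub_C_mul_X (c b : k) :
    rescale c (1 - C b * X)⁻¹ = (1 - C (b * c) * X)⁻¹ := by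
  rw [map_inv_of_constantCoeff_ne_zero _ (by simp), map_sub, map_one, map_mul, rescale_C,
    rescale_X, ← mul_assoc, ← map_mul]

theorem hasSubst_X_mul_inv_one_sub_C_mul_X (b : k) : HasSubst (X * (1 - C b * X)⁻¹) :=
  HasSubst.of_constantCoeff_zero' (by simp)

theorem subst_inv_one_sub_C_mul_X (a b : k) :
    ((1 - C a * X)⁻¹ : k⟦X⟧).subst (X * (1 - C b * X)⁻¹) =
      (1 - C b * X) * (1 - C (a + b) * X)⁻¹ := by
  have hs := hasSubst_X_mul_inv_one_sub_C_mul_X b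
  rw [← coe_substAlgHom hs, map_inv_of_constantCoeff_ne_zero _ (by simp), map_sub, map_one,
    map_mul, coe_substAlgHom, subst_X hs, subst_C, ← C_apply, eq_comm,
    eq_inv_iff_mul_eq_one (by simp)]
  have hb := PowerSeries.mul_inv_cancel (1 - C b * X) (by simp)
  have hab := PowerSeries.mul_inv_cancel (1 - C (a + b) * X) (by simp)
  linear_combination (-C a * X * (1 - C (a + b) * X)⁻¹) * hb + hab +
    X * (1 - C (a + b) * X)⁻¹ * map_add C a b

theorem subst_X_mul_inv_one_sub_C_mul_X (a b : k) :
    (X * (1 - C a * X)⁻¹ : k⟦X⟧).subst (X * (1 - C b * X)⁻¹) = X * (1 - C (a + b) * X)⁻¹ := by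
  have hs := hasSubst_X_mul_inv_one_sub_C_mul_X b
  rw [subst_mul hs, subst_X hs, subst_inv_one_sub_C_mul_X]
  have hb := PowerSeries.mul_inv_cancel (1 - C b * X) (by simp)
  linear_combination X * (1 - C (a + b) * X)⁻¹ * hb

end

theorem comp_eq_subst (f : ℚ⟦X⟧) {g : ℚ⟦X⟧} (hg : constantCoeff g = 0) :
    comp f g = f.subst g := by
  ext n
  rw [comp, coeff_mk, coeff_subst' (HasSubst.of_constantCoeff_zero' hg)]
  refine (finsum_eq_sum_of_support_subset _ fun d hd => ?_).symm
  rw [Finset.coe_range, Set.mem_Iio]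
  by_contra! h
  refine hd ?_
  dsimp only
  rw [X_pow_dvd_iff.mp (pow_dvd_pow_of_dvd (X_dvd_iff.mpr hg) d) n (by omega), mul_zero]

theorem shift_C_add_X_mul (c : ℚ) (s : ℚ⟦X⟧) : shift (C c + X * s) = s := by
  ext n
  rw [shift, coeff_mk, map_add, coeff_C, coeff_succ_X_mul]
  simp

theorem aact_C_add_X_mul (a g f : ℚ⟦X⟧) (c : ℚ) (s : ℚ⟦X⟧) :
    aact a g f (C c + X * s) = C c * a + X * g * comp s f := by
  simp [aact, shift_C_add_X_mul]

theorem amul_inv_one_sub_C_mul_X (a : ℚ⟦X⟧) (b b' c r : ℚ) :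
    amul (a, (1 - C b * X)⁻¹ ^ 2, X * (1 - C b * X)⁻¹)
        (C c + X * (r • (1 - C b' * X)⁻¹), (1 - C b' * X)⁻¹ ^ 2, X * (1 - C b' * X)⁻¹) =
      (C c * a + C r * X * (1 - C b * X)⁻¹ * (1 - C (b' + b) * X)⁻¹,
        (1 - C (b' + b) * X)⁻¹ ^ 2, X * (1 - C (b' + b) * X)⁻¹) := by
  have hs := hasSubst_X_mul_inv_one_sub_C_mul_X b
  have hf : constantCoeff (X * (1 - C b * X)⁻¹ : ℚ⟦X⟧) = 0 := by simp
  have hb := PowerSeries.mul_inv_cancel (1 - C b * X) (by simp)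
  simp only [amul, aact_C_add_X_mul, comp_eq_subst _ hf, subst_smul hs, subst_pow hs,
    subst_inv_one_sub_C_mul_X, subst_X_mul_inv_one_sub_C_mul_X]
  rw [smul_eq_C_mul]
  refine Prod.ext ?_ (Prod.ext ?_ rfl)
  · linear_combination C r * X * (1 - C b * X)⁻¹ * (1 - C (b' + b) * X)⁻¹ * hb
  · linear_combination (1 - C (b' + b) * X)⁻¹ ^ 2 * ((1 - C b * X) * (1 - C b * X)⁻¹ + 1) * hb

/-- A_r = ((1+(r-1)x)/(1-x); 1/(1-x)^2, x/(1-x)) is a pseudo-involution in the group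
of almost Riordan arrays of order 1: its inverse is (1 - rx/(1+x); 1/(1+x)^2, x/(1+x)),
which is obtained from A_r by a ↦ a(-x), g ↦ g(-x), f ↦ -f(-x). -/
theorem Ar_pseudo_involution (r : ℚ) :
    let A : ℚ⟦X⟧ × ℚ⟦X⟧ × ℚ⟦X⟧ :=
      ((1 + PowerSeries.C (r - 1) * X) * (1 - X)⁻¹, (1 - X)⁻¹ ^ 2, X * (1 - X)⁻¹)
    let B : ℚ⟦X⟧ × ℚ⟦X⟧ × ℚ⟦X⟧ :=
      (1 - PowerSeries.C r * X * (1 + X)⁻¹, (1 + X)⁻¹ ^ 2, X * (1 + X)⁻¹)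
    amul A B = (1, 1, X) ∧ amul B A = (1, 1, X) ∧
    B.1 = PowerSeries.rescale (-1) A.1 ∧
    B.2.1 = PowerSeries.rescale (-1) A.2.1 ∧
    B.2.2 = -PowerSeries.rescale (-1) A.2.2 := by
  intro A B
  have hu : (1 - X : ℚ⟦X⟧) = 1 - C 1 * X := by simp
  have hv : (1 + X : ℚ⟦X⟧) = 1 - C (-1) * X := by simp [sub_eq_add_neg]
  have hA : A = (C 1 + X * (r • (1 - C 1 * X)⁻¹), (1 - C 1 * X)⁻¹ ^ 2, X * (1 - C 1 * X)⁻¹) := by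
    rw [← hu, smul_eq_C_mul, map_one]
    refine Prod.ext ?_ rfl
    dsimp only [A]
    rw [map_sub, map_one]
    linear_combination PowerSeries.mul_inv_cancel (1 - X : ℚ⟦X⟧) (by simp)
  have hB : B = (C 1 + X * ((-r) • (1 - C (-1) * X)⁻¹), (1 - C (-1) * X)⁻¹ ^ 2,
      X * (1 - C (-1) * X)⁻¹) := by
    rw [← hv, smul_eq_C_mul, map_one, map_neg]
    refine Prod.ext ?_ rfl
    dsimp only [B]
    ring
  have hrescale : rescale (-1 : ℚ) (1 - C 1 * X)⁻¹ = (1 - C (-1) * X)⁻¹ := by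
    rw [rescale_inv_one_sub_C_mul_X, one_mul]
  rw [hA, hB, amul_inv_one_sub_C_mul_X, amul_inv_one_sub_C_mul_X]
  simp only [neg_add_cancel, add_neg_cancel, map_zero, zero_mul, sub_zero, inv_one, mul_one,
    one_pow, smul_eq_C_mul, map_add, map_mul, map_pow, hrescale, rescale_X, rescale_C]
  refine ⟨Prod.ext ?_ rfl, Prod.ext ?_ rfl, ?_, trivial, ?_⟩ <;>
    simp only [map_one, map_neg] <;> ring
end

section
/- For A_r = ((1+x(r-1))/(1-x); 1/(1-x)^2, x/(1-x)) in the group of almost Riordan arrays, the p-th power satisfies A_r^p = ( (1-px+prx)/(1-px) ; 1/(1-px)^2, x/(1-px) ) for every natural number p, i.e., the p-fold product of A_r with itself has first column generating function 1 + prx/(1-px) and interior pair (1/(1-px)^2, x/(1-px)). -/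
open PowerSeries

/-- Iterated product (p-th power) in the group of almost Riordan arrays of order 1. -/
noncomputable def aPow (M : ℚ⟦X⟧ × ℚ⟦X⟧ × ℚ⟦X⟧) : ℕ → ℚ⟦X⟧ × ℚ⟦X⟧ × ℚ⟦X⟧
  | 0 => (1, 1, X)
  | n + 1 => amul (aPow M n) M

lemma coeff_comp (f g : ℚ⟦X⟧) (n : ℕ) :
    PowerSeries.coeff n (comp f g) = ∑ k ∈ Finset.range (n + 1),
      PowerSeries.coeff k f * PowerSeries.coeff n (g ^ k) := by
  simp [comp]

lemma coeff_pow_zero {g : ℚ⟦X⟧} (hg : constantCoeff g = 0) {n k : ℕ} (h : n < k) :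
    PowerSeries.coeff n (g ^ k) = 0 := by
  have hd : (X : ℚ⟦X⟧) ^ k ∣ g ^ k := pow_dvd_pow_of_dvd (PowerSeries.X_dvd_iff.2 hg) k
  exact PowerSeries.X_pow_dvd_iff.1 hd n h

lemma coeff_comp_of_agree {g : ℚ⟦X⟧} (hg : constantCoeff g = 0) {f : ℚ⟦X⟧} {n : ℕ}
    (P : Polynomial ℚ) (hP : ∀ k ≤ n, P.coeff k = PowerSeries.coeff k f) :
    PowerSeries.coeff n (Polynomial.aeval g P) = PowerSeries.coeff n (comp f g) := by
  rw [coeff_comp]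
  set N := max (P.natDegree + 1) (n + 1) with hN
  rw [Polynomial.aeval_eq_sum_range' (lt_of_lt_of_le (Nat.lt_succ_self _) (le_max_left _ _))]
  rw [map_sum]
  have h1 : ∑ i ∈ Finset.range N, PowerSeries.coeff n (P.coeff i • g ^ i)
      = ∑ i ∈ Finset.range N, PowerSeries.coeff i f * PowerSeries.coeff n (g ^ i) := by
    refine Finset.sum_congr rfl fun i _ => ?_
    rw [PowerSeries.coeff_smul, smul_eq_mul]
    rcases le_or_gt i n with h | h
    · rw [hP i h]
    · rw [coeff_pow_zero hg h, mul_zero, mul_zero]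
  rw [h1]
  symm
  apply Finset.sum_subset (Finset.range_subset_range.2 (le_max_right _ _))
  intro i _ hi
  simp only [Finset.mem_range, not_lt] at hi
  have hni : n < i := by omega
  rw [coeff_pow_zero hg hni, mul_zero]

lemma comp_add (f₁ f₂ g : ℚ⟦X⟧) : comp (f₁ + f₂) g = comp f₁ g + comp f₂ g := by
  ext n
  simp [coeff_comp, add_mul, Finset.sum_add_distrib]

lemma comp_C (a : ℚ) (g : ℚ⟦X⟧) : comp (PowerSeries.C a) g = PowerSeries.C a := by
  ext n
  rw [coeff_comp]
  simp only [PowerSeries.coeff_C]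
  rw [Finset.sum_eq_single 0]
  · simp
  · intro k _ hk; simp [hk]
  · simp

lemma comp_one (g : ℚ⟦X⟧) : comp 1 g = 1 := by
  have := comp_C 1 g; simpa using this

lemma comp_X {g : ℚ⟦X⟧} (hg : constantCoeff g = 0) : comp X g = g := by
  ext n
  rw [coeff_comp]
  rw [Finset.sum_eq_single 1]
  · simp
  · intro k _ hk; simp [PowerSeries.coeff_X, hk]
  · intro h
    simp only [Finset.mem_range, not_lt, Nat.succ_le_iff] at h
    interval_cases n
    simp [hg]

lemma comp_mul {g : ℚ⟦X⟧} (hg : constantCoeff g = 0) (f₁ f₂ : ℚ⟦X⟧) :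
    comp (f₁ * f₂) g = comp f₁ g * comp f₂ g := by
  ext n
  set T₁ := PowerSeries.trunc (n + 1) f₁
  set T₂ := PowerSeries.trunc (n + 1) f₂
  have h1 : PowerSeries.coeff n (comp (f₁ * f₂) g)
      = PowerSeries.coeff n (Polynomial.aeval g (T₁ * T₂)) := by
    symm
    apply coeff_comp_of_agree hg
    intro k hk
    rw [Polynomial.coeff_mul, PowerSeries.coeff_mul]
    refine Finset.sum_congr rfl fun p hp => ?_
    rw [Finset.HasAntidiagonal.mem_antidiagonal] at hp
    rw [PowerSeries.coeff_trunc, PowerSeries.coeff_trunc]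
    rw [if_pos, if_pos]
    · omega
    · omega
  rw [h1, map_mul, PowerSeries.coeff_mul, PowerSeries.coeff_mul]
  refine Finset.sum_congr rfl fun p hp => ?_
  rw [Finset.HasAntidiagonal.mem_antidiagonal] at hp
  rw [coeff_comp_of_agree hg T₁ (fun k hk => by rw [PowerSeries.coeff_trunc, if_pos]; omega),
      coeff_comp_of_agree hg T₂ (fun k hk => by rw [PowerSeries.coeff_trunc, if_pos]; omega)]

lemma constantCoeff_comp {g : ℚ⟦X⟧} (hg : constantCoeff g = 0) (f : ℚ⟦X⟧) :
    constantCoeff (comp f g) = constantCoeff f := by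
  have := coeff_comp f g 0
  simp only [zero_add, Finset.range_one, Finset.sum_singleton, pow_zero] at this
  rw [← PowerSeries.coeff_zero_eq_constantCoeff_apply, this]
  simp

lemma comp_inv {g : ℚ⟦X⟧} (hg : constantCoeff g = 0) {f : ℚ⟦X⟧}
    (hf : constantCoeff f ≠ 0) : comp f⁻¹ g = (comp f g)⁻¹ := by
  have hc : constantCoeff (comp f g) ≠ 0 := by rwa [constantCoeff_comp hg]
  rw [PowerSeries.eq_inv_iff_mul_eq_one hc, ← comp_mul hg, PowerSeries.inv_mul_cancel _ hf,
    comp_one]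

lemma comp_neg (f g : ℚ⟦X⟧) : comp (-f) g = -comp f g := by
  ext n
  simp [coeff_comp, Finset.sum_neg_distrib]

lemma comp_sub (f₁ f₂ g : ℚ⟦X⟧) : comp (f₁ - f₂) g = comp f₁ g - comp f₂ g := by
  rw [sub_eq_add_neg, comp_add, comp_neg, sub_eq_add_neg]

lemma shift_C_add_X_mul_s5 (b : ℚ) (h : ℚ⟦X⟧) :
    shift (PowerSeries.C b + X * h) = h := by
  ext n
  simp [shift, PowerSeries.coeff_C, PowerSeries.coeff_succ_X_mul]

lemma one_sub_ne (c : ℚ) : (1 - PowerSeries.C c * X : ℚ⟦X⟧) ≠ 0 := by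
  intro h
  have : constantCoeff (1 - PowerSeries.C c * X : ℚ⟦X⟧) = 1 := by
    simp [PowerSeries.constantCoeff_X]
  rw [h] at this
  simp at this

lemma one_sub_cc (c : ℚ) : constantCoeff (1 - PowerSeries.C c * X : ℚ⟦X⟧) = 1 := by
  simp [PowerSeries.constantCoeff_X]

/-- A_r^p = (1 + prx/(1-px); 1/(1-px)^2, x/(1-px)). -/
theorem Ar_pow (r : ℚ) (p : ℕ) :
    aPow ((1 + PowerSeries.C (r - 1) * X) * (1 - X)⁻¹, (1 - X)⁻¹ ^ 2, X * (1 - X)⁻¹) p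
      = (1 + PowerSeries.C ((p : ℚ) * r) * X * (1 - PowerSeries.C (p : ℚ) * X)⁻¹,
         (1 - PowerSeries.C (p : ℚ) * X)⁻¹ ^ 2,
         X * (1 - PowerSeries.C (p : ℚ) * X)⁻¹) := by
  induction p with
  | zero =>
    have h1 : (1 : ℚ⟦X⟧)⁻¹ = 1 := by
      rw [eq_comm, PowerSeries.eq_inv_iff_mul_eq_one (by simp)]; simp
    simp [aPow, h1]
  | succ p ih =>
    set q : ℚ := (p : ℚ) with hq
    have hcast : ((p + 1 : ℕ) : ℚ) = q + 1 := by push_cast; rfl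
    rw [show (aPow ((1 + PowerSeries.C (r - 1) * X) * (1 - X)⁻¹, (1 - X)⁻¹ ^ 2,
        X * (1 - X)⁻¹) (p + 1)) = amul (aPow ((1 + PowerSeries.C (r - 1) * X) * (1 - X)⁻¹,
        (1 - X)⁻¹ ^ 2, X * (1 - X)⁻¹) p) ((1 + PowerSeries.C (r - 1) * X) * (1 - X)⁻¹,
        (1 - X)⁻¹ ^ 2, X * (1 - X)⁻¹) from rfl, ih, hcast]
    -- notation
    set P : ℚ⟦X⟧ := 1 - PowerSeries.C q * X with hP
    set S : ℚ⟦X⟧ := 1 - PowerSeries.C (q + 1) * X with hS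
    set F : ℚ⟦X⟧ := X * P⁻¹ with hFdef
    have hF0 : constantCoeff F = 0 := by
      rw [hFdef, map_mul, PowerSeries.constantCoeff_X, zero_mul]
    have e1 : P⁻¹ * P = 1 := PowerSeries.inv_mul_cancel _ (by rw [one_sub_cc]; norm_num)
    have e2 : S⁻¹ * S = 1 := PowerSeries.inv_mul_cancel _ (by rw [one_sub_cc]; norm_num)
    have h1X : (1 - X : ℚ⟦X⟧) * (1 - X)⁻¹ = 1 :=
      PowerSeries.mul_inv_cancel _ (by simp [PowerSeries.constantCoeff_X])
    -- the key composition facts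
    have hPS : P * (1 - F) = S := by
      have h' : P * F = X := by
        rw [hFdef, show P * (X * P⁻¹) = (P⁻¹ * P) * X from by ring, e1, one_mul]
      rw [mul_sub, mul_one, h', hP, hS, map_add, map_one]
      ring
    have hcompinv : comp (1 - X)⁻¹ F = P * S⁻¹ := by
      have h1 : comp (1 - X) F = 1 - F := by
        rw [comp_sub, comp_one, comp_X hF0]
      have hcc : constantCoeff (comp (1 - X) F) ≠ 0 := by
        rw [constantCoeff_comp hF0]; simp [PowerSeries.constantCoeff_X]
      have hcc2 : constantCoeff (1 - F : ℚ⟦X⟧) ≠ 0 := by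
        rw [map_sub, hF0, map_one]; norm_num
      rw [comp_inv hF0 (by simp [PowerSeries.constantCoeff_X]), h1, eq_comm,
        PowerSeries.eq_inv_iff_mul_eq_one hcc2]
      calc P * S⁻¹ * (1 - F) = (P * (1 - F)) * S⁻¹ := by ring
        _ = S * S⁻¹ := by rw [hPS]
        _ = 1 := by rw [← e2]; ring
    -- now the three components
    refine Prod.ext ?_ (Prod.ext ?_ ?_)
    · -- first column
      show aact (1 + PowerSeries.C (q * r) * X * P⁻¹) (P⁻¹ ^ 2) F
        ((1 + PowerSeries.C (r - 1) * X) * (1 - X)⁻¹)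
        = 1 + PowerSeries.C ((q + 1) * r) * X * S⁻¹
      have ha : (1 + PowerSeries.C (r - 1) * X) * (1 - X)⁻¹
          = PowerSeries.C 1 + X * (PowerSeries.C r * (1 - X)⁻¹) := by
        have : (1 + PowerSeries.C (r - 1) * X : ℚ⟦X⟧)
            = (1 - X) + PowerSeries.C r * X := by
          rw [map_sub, map_one]; ring
        rw [this, add_mul, h1X, map_one]
        ring
      rw [aact, ha, shift_C_add_X_mul_s5]
      have hcc1 : constantCoeff (PowerSeries.C 1 + X * (PowerSeries.C r * (1 - X)⁻¹)) = 1 := by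
        simp [PowerSeries.constantCoeff_X]
      rw [hcc1, map_one, one_mul]
      rw [comp_mul hF0, comp_C, hcompinv]
      -- goal: 1 + C(q r) X P⁻¹ + X * P⁻¹^2 * (C r * (P * S⁻¹)) = 1 + C((q+1) r) X S⁻¹
      apply mul_right_cancel₀ (b := P * S) (mul_ne_zero (one_sub_ne q) (one_sub_ne (q + 1)))
      have expand : (1 + PowerSeries.C (q * r) * X * P⁻¹ + X * P⁻¹ ^ 2 *
          (PowerSeries.C r * (P * S⁻¹))) * (P * S)
          = P * S + PowerSeries.C (q * r) * X * S * (P⁻¹ * P)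
            + PowerSeries.C r * X * ((P⁻¹ * P) * (P⁻¹ * P)) * (S⁻¹ * S) := by ring
      have expand2 : (1 + PowerSeries.C ((q + 1) * r) * X * S⁻¹) * (P * S)
          = P * S + PowerSeries.C ((q + 1) * r) * X * P * (S⁻¹ * S) := by ring
      rw [expand, expand2, e1, e2, hP, hS]
      simp only [map_mul, map_add, map_one]
      ring
    · -- interior g
      show P⁻¹ ^ 2 * comp ((1 - X)⁻¹ ^ 2) F = S⁻¹ ^ 2
      rw [sq ((1 - X)⁻¹ : ℚ⟦X⟧), comp_mul hF0, hcompinv]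
      calc P⁻¹ ^ 2 * (P * S⁻¹ * (P * S⁻¹)) = (P⁻¹ * P) * (P⁻¹ * P) * S⁻¹ ^ 2 := by ring
        _ = S⁻¹ ^ 2 := by rw [e1]; ring
    · -- interior f
      show comp (X * (1 - X)⁻¹) F = X * S⁻¹
      rw [comp_mul hF0, comp_X hF0, hcompinv, hFdef]
      calc X * P⁻¹ * (P * S⁻¹) = (P⁻¹ * P) * (X * S⁻¹) := by ring
        _ = X * S⁻¹ := by rw [e1, one_mul]
end

section
/- If (g,f) is a pseudo-involution in the Riordan group (i.e., the inverse of (g,f) equals (g(-x), -f(-x))), then (1; g, f) is a pseudo-involution in the group of almost Riordan arrays of order 1. -/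
open PowerSeries

lemma shift_C (c : ℚ) : shift (C c) = 0 := by
  ext n
  simp [shift]

lemma comp_zero (f : ℚ⟦X⟧) : comp 0 f = 0 := by
  ext n
  simp [comp]

lemma aact_C (a g f : ℚ⟦X⟧) (c : ℚ) : aact a g f (C c) = C c * a := by
  simp [aact, shift_C, comp_zero]

lemma amul_C (a g f u v : ℚ⟦X⟧) (c : ℚ) :
    amul (a, g, f) (C c, u, v) = (C c * a, rmul (g, f) (u, v)) := by
  simp [amul, rmul, aact_C]

lemma amul_one (a g f u v : ℚ⟦X⟧) : amul (a, g, f) (1, u, v) = (a, rmul (g, f) (u, v)) := by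
  simpa using amul_C a g f u v 1

theorem one_g_f_pseudo_involution_general (g f : ℚ⟦X⟧)
    (h1 : rmul (g, f) (PowerSeries.rescale (-1) g, -PowerSeries.rescale (-1) f) = (1, X))
    (h2 : rmul (PowerSeries.rescale (-1) g, -PowerSeries.rescale (-1) f) (g, f) = (1, X)) :
    amul (1, g, f) (1, PowerSeries.rescale (-1) g, -PowerSeries.rescale (-1) f) = (1, 1, X) ∧
    amul (1, PowerSeries.rescale (-1) g, -PowerSeries.rescale (-1) f) (1, g, f) = (1, 1, X) := by
  rw [amul_one, amul_one, h1, h2]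
  exact ⟨rfl, rfl⟩

/-- If (g,f) is a pseudo-involution in the Riordan group (its inverse is (g(-x), -f(-x))),
then (1; g, f) is a pseudo-involution in the group of almost Riordan arrays of order 1. -/
theorem one_g_f_pseudo_involution (g f : ℚ⟦X⟧)
    (hg0 : PowerSeries.constantCoeff g = 1)
    (hf0 : PowerSeries.constantCoeff f = 0)
    (hf1 : PowerSeries.coeff 1 f = 1)
    (h1 : rmul (g, f) (PowerSeries.rescale (-1) g, -PowerSeries.rescale (-1) f) = (1, X))
    (h2 : rmul (PowerSeries.rescale (-1) g, -PowerSeries.rescale (-1) f) (g, f) = (1, X)) :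
    amul (1, g, f) (1, PowerSeries.rescale (-1) g, -PowerSeries.rescale (-1) f) = (1, 1, X) ∧
    amul (1, PowerSeries.rescale (-1) g, -PowerSeries.rescale (-1) f) (1, g, f) = (1, 1, X) :=
  one_g_f_pseudo_involution_general g f h1 h2
end

section
/- Let (g,f) be an involution in the Riordan group, i.e., f(f(x)) = x and g(x)·g(f(x)) = 1. Then the almost Riordan array (a; g, f) with a(x) = x·g(x)/f(x) is an involution in the group of almost Riordan arrays of order 1. -/
/-
Composition with a series `f` of zero constant term agrees with `PowerSeries.subst`, so it is a
ring homomorphism. Writing `a = a(0) + x·ã`, multiplying the first entry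
`a(0)·a + x·g·(ã ∘ f)` of the square by `f` and using `a·f = x·g` gives `x·g·(a ∘ f)`;
composing `a·f = x·g` with `f` and using `f ∘ f = x` gives `x·(a ∘ f) = f·(g ∘ f)`, so this
equals `f·g·(g ∘ f) = f`. Cancelling `f ≠ 0` shows the first entry is `1`, while the other
two entries are `g·(g ∘ f) = 1` and `f ∘ f = x` by hypothesis.
-/

open PowerSeries

lemma coeff_pow_eq_zero_of_lt {R : Type*} [Semiring R] {f : R⟦X⟧} (hf : constantCoeff f = 0)
    {n k : ℕ} (h : n < k) : coeff n (f ^ k) = 0 :=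
  coeff_of_lt_order _ <| (Nat.cast_lt.mpr h).trans_le
    (le_order_pow_of_constantCoeff_eq_zero k hf)

section Composition

variable {f : ℚ⟦X⟧} (hf : constantCoeff f = 0)
include hf

lemma comp_eq_subst_s13 (p : ℚ⟦X⟧) : comp p f = p.subst f := by
  ext n
  rw [coeff_subst' (HasSubst.of_constantCoeff_zero' hf), comp, coeff_mk,
    finsum_eq_sum_of_support_subset _ (s := Finset.range (n + 1))]
  · simp only [smul_eq_mul]
  · intro k hk
    by_contra hkn
    simp only [Finset.coe_range, Set.mem_Iio, not_lt] at hkn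
    exact hk (by simp only [coeff_pow_eq_zero_of_lt hf (show n < k by omega), smul_zero])

lemma comp_mul_s13 (p q : ℚ⟦X⟧) : comp (p * q) f = comp p f * comp q f := by
  simp only [comp_eq_subst_s13 hf, subst_mul (HasSubst.of_constantCoeff_zero' hf)]

lemma comp_X_s13 : comp X f = f := by
  rw [comp_eq_subst_s13 hf, subst_X (HasSubst.of_constantCoeff_zero' hf)]

lemma comp_eq_C_add_mul_comp_shift (p : ℚ⟦X⟧) :
    comp p f = C (constantCoeff p) + f * comp (shift p) f := by
  have hs := HasSubst.of_constantCoeff_zero' hf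
  conv_lhs => rw [eq_X_mul_shift_add_const p]
  rw [comp_eq_subst_s13 hf, comp_eq_subst_s13 hf, subst_add hs, subst_mul hs, subst_X hs, subst_C,
    add_comm]
  rfl

lemma aact_mul_right (a g b : ℚ⟦X⟧) :
    aact a g f b * f =
      C (constantCoeff b) * (a * f) + X * g * (comp b f - C (constantCoeff b)) := by
  rw [aact, comp_eq_C_add_mul_comp_shift hf b]
  ring

end Composition

theorem almost_involution_general (g f a : ℚ⟦X⟧)
    (hf0 : PowerSeries.constantCoeff f = 0)
    (hff : comp f f = X) (hgg : g * comp g f = 1)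
    (ha : a * f = X * g) :
    amul (a, g, f) (a, g, f) = (1, 1, X) := by
  have hf : f ≠ 0 := by
    rintro rfl
    simpa [comp] using congrArg (coeff 1) hff
  have hcomp : X * comp a f = f * comp g f := by
    rw [mul_comm, ← hff, ← comp_mul_s13 hf0, ha, comp_mul_s13 hf0, comp_X_s13 hf0]
  have hact : aact a g f a * f = 1 * f := by
    rw [aact_mul_right hf0, ha]
    linear_combination g * hcomp + f * hgg
  simp only [amul, Prod.mk.injEq]
  exact ⟨mul_right_cancel₀ hf hact, hgg, hff⟩

/-- If (g,f) is a Riordan involution (f∘f = x and g·(g∘f) = 1), then the almost Riordan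
array (a; g, f) with a = x·g/f is an involution in the group of almost Riordan arrays
of order 1. -/
theorem almost_involution (g f a : ℚ⟦X⟧)
    (hg0 : PowerSeries.constantCoeff g = 1)
    (hf0 : PowerSeries.constantCoeff f = 0)
    (hff : comp f f = X) (hgg : g * comp g f = 1)
    (ha : a * f = X * g) :
    amul (a, g, f) (a, g, f) = (1, 1, X) :=
  almost_involution_general g f a hf0 hff hgg ha
end

section
/- If (g(x), f(x)) is an involution in the Riordan group (f∘f = x, g·(g∘f) = 1), then for every natural number n, ((x/f(x))^n · g(x), f(x)) is also an involution in the Riordan group. -/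
open PowerSeries

/-! Composition with `f` is the substitution endomorphism `φ` of `ℚ⟦X⟧`, and it swaps `X` and `f`.
Thus `u = X / f` satisfies `u · φ(u) = 1`, and so does `b = uⁿ · g` because `g · φ(g) = 1`;
the division is avoided by cancelling the nonzero factor `(X · f)ⁿ`. -/

theorem comp_eq_subst_s14 (a : ℚ⟦X⟧) {f : ℚ⟦X⟧} (hf0 : constantCoeff f = 0) :
    comp a f = a.subst f := by
  ext n
  rw [comp, coeff_mk, coeff_subst' (HasSubst.of_constantCoeff_zero' hf0)]
  refine (finsum_eq_sum_of_support_subset _ fun k hk => ?_).symm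
  have hcoeff : coeff n (f ^ k) ≠ 0 := right_ne_zero_of_mul hk
  simp only [Finset.coe_range, Set.mem_Iio]
  by_contra! hnk
  exact hcoeff <| coeff_of_lt_order n <|
    (Nat.cast_lt.mpr (Nat.lt_of_succ_le hnk)).trans_le (le_order_pow_of_constantCoeff_eq_zero k hf0)

theorem mul_map_eq_one_of_mul_pow_eq_pow_mul {R : Type*} [CommRing R] [IsDomain R] (φ : R →+* R)
    {x y g b : R} {n : ℕ} (hx : φ x = y) (hy : φ y = x) (hxy : x * y ≠ 0) (hg : g * φ g = 1)
    (hb : b * y ^ n = x ^ n * g) : b * φ b = 1 := by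
  have hφb : φ b * x ^ n = y ^ n * φ g := by
    simpa only [map_mul, map_pow, hx, hy] using congrArg φ hb
  refine mul_right_cancel₀ (pow_ne_zero n hxy) ?_
  calc b * φ b * (x * y) ^ n = (b * y ^ n) * (φ b * x ^ n) := by ring
    _ = (g * φ g) * (x * y) ^ n := by rw [hb, hφb]; ring
    _ = 1 * (x * y) ^ n := by rw [hg]

theorem involution_x_div_f_pow_general (g f : ℚ⟦X⟧)
    (hf0 : PowerSeries.constantCoeff f = 0)
    (hff : comp f f = X) (hgg : g * comp g f = 1)
    (n : ℕ) (b : ℚ⟦X⟧) (hb : b * f ^ n = X ^ n * g) :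
    rmul (b, f) (b, f) = (1, X) := by
  have hf : HasSubst f := HasSubst.of_constantCoeff_zero' hf0
  let φ : ℚ⟦X⟧ →+* ℚ⟦X⟧ := (substAlgHom (R := ℚ) hf :)
  have hφ (a : ℚ⟦X⟧) : φ a = comp a f :=
    (congrFun (coe_substAlgHom hf) a).trans (comp_eq_subst_s14 a hf0).symm
  have hφX : φ X = f := by rw [hφ, comp_eq_subst_s14 X hf0, subst_X hf]
  have hφf : φ f = X := (hφ f).trans hff
  have hXf : X * f ≠ 0 :=
    mul_ne_zero X_ne_zero fun hf_zero => X_ne_zero (by rw [← hφf, hf_zero, map_zero])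
  have hbb := mul_map_eq_one_of_mul_pow_eq_pow_mul φ hφX hφf hXf (by rwa [hφ]) hb
  rw [rmul, ← hφ, hbb, hff]

/-- If (g,f) is a Riordan involution, then ((x/f)^n · g, f) is a Riordan involution
for every natural number n. -/
theorem involution_x_div_f_pow (g f : ℚ⟦X⟧)
    (hg0 : PowerSeries.constantCoeff g = 1)
    (hf0 : PowerSeries.constantCoeff f = 0)
    (hff : comp f f = X) (hgg : g * comp g f = 1)
    (n : ℕ) (b : ℚ⟦X⟧) (hb : b * f ^ n = X ^ n * g) :
    rmul (b, f) (b, f) = (1, X) :=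
  involution_x_div_f_pow_general g f hf0 hff hgg n b hb
end

section
/- The Riordan array (1/(1-4x^2)^{3/2}, x/√(1-4x^2)) is a quasi-involution: its inverse equals (1/(1+4x^2)^{3/2}, x/√(1+4x^2)). Equivalently, the compositional inverse of x/√(1-4x^2) is x/√(1+4x^2). -/
open PowerSeries

/-!
Let `g = X / t`. Since `t² - 4X² = 1`, one has `(s ∘ g)² = 1 - 4X²/t² = 1/t²`, and comparing
constant terms gives `s ∘ g = 1/t`. Composition with `g` is a ring homomorphism (it is
`PowerSeries.subst g`), so `(X/s) ∘ g = g · t = X` and `s⁻³ ∘ g = t³`; the same argument with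
`4` replaced by `-4` gives the other order.
-/

namespace Riordan

variable {f g : ℚ⟦X⟧}

lemma coeff_pow_eq_zero_of_lt (hg : constantCoeff g = 0) {n k : ℕ} (h : n < k) :
    coeff n (g ^ k) = 0 :=
  X_pow_dvd_iff.mp (pow_dvd_pow_of_dvd (X_dvd_iff.mpr hg) k) n h

theorem comp_eq_subst (hg : constantCoeff g = 0) (f : ℚ⟦X⟧) : comp f g = f.subst g := by
  ext n
  rw [coeff_subst' (HasSubst.of_constantCoeff_zero' hg), comp, coeff_mk,
    finsum_eq_sum_of_support_subset _ (s := Finset.range (n + 1))]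
  · rfl
  · intro k hk
    contrapose! hk
    simp [coeff_pow_eq_zero_of_lt hg (by simpa using hk)]

noncomputable def compAlgHom (hg : constantCoeff g = 0) : ℚ⟦X⟧ →ₐ[ℚ] ℚ⟦X⟧ :=
  substAlgHom (HasSubst.of_constantCoeff_zero' hg)

lemma compAlgHom_apply (hg : constantCoeff g = 0) (f : ℚ⟦X⟧) :
    compAlgHom hg f = comp f g := by
  rw [compAlgHom, coe_substAlgHom, comp_eq_subst hg]

lemma compAlgHom_X (hg : constantCoeff g = 0) : compAlgHom hg X = g := by
  rw [compAlgHom, coe_substAlgHom, subst_X (HasSubst.of_constantCoeff_zero' hg)]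

lemma compAlgHom_C (hg : constantCoeff g = 0) (c : ℚ) : compAlgHom hg (C c) = C c := by
  rw [← algebraMap_eq, AlgHom.commutes]

lemma constantCoeff_comp (f g : ℚ⟦X⟧) : constantCoeff (comp f g) = constantCoeff f := by
  rw [← coeff_zero_eq_constantCoeff_apply, comp, coeff_mk]
  simp

lemma comp_inv (hg : constantCoeff g = 0) (hf : constantCoeff f ≠ 0) :
    comp f⁻¹ g = (comp f g)⁻¹ := by
  rw [PowerSeries.eq_inv_iff_mul_eq_one (by rwa [constantCoeff_comp]), ← compAlgHom_apply hg,
    ← compAlgHom_apply hg, ← map_mul, PowerSeries.inv_mul_cancel _ hf, map_one]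

lemma eq_one_of_sq_eq_one {u : ℚ⟦X⟧} (h : u ^ 2 = 1) (hu : constantCoeff u = 1) : u = 1 := by
  refine (sq_eq_one_iff.mp h).resolve_right fun h' => ?_
  have := congrArg constantCoeff h'
  norm_num [hu] at this

variable {a b : ℚ⟦X⟧} {c : ℚ}

theorem comp_X_mul_inv_eq_inv (ha0 : constantCoeff a = 1) (ha : a ^ 2 = 1 - C c * X ^ 2)
    (hb0 : constantCoeff b = 1) (hb : b ^ 2 = 1 + C c * X ^ 2) :
    comp a (X * b⁻¹) = b⁻¹ := by
  have hg : constantCoeff (X * b⁻¹) = 0 := by simp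
  have hbb : b * b⁻¹ = 1 := PowerSeries.mul_inv_cancel _ (by simp [hb0])
  have hsq : (comp a (X * b⁻¹) * b) ^ 2 = 1 :=
    calc (comp a (X * b⁻¹) * b) ^ 2 = compAlgHom hg (a ^ 2) * b ^ 2 := by
          rw [map_pow, compAlgHom_apply, mul_pow]
      _ = (1 - C c * (X * b⁻¹) ^ 2) * b ^ 2 := by
          rw [ha, map_sub, map_one, map_mul, map_pow, compAlgHom_X, compAlgHom_C]
      _ = b ^ 2 - C c * X ^ 2 * (b * b⁻¹) ^ 2 := by ring
      _ = 1 := by rw [hbb, hb]; ring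
  rw [PowerSeries.eq_inv_iff_mul_eq_one (by simp [hb0])]
  exact eq_one_of_sq_eq_one hsq (by simp [constantCoeff_comp, ha0, hb0])

theorem comp_inv_pow_X_mul_inv (ha0 : constantCoeff a = 1) (ha : a ^ 2 = 1 - C c * X ^ 2)
    (hb0 : constantCoeff b = 1) (hb : b ^ 2 = 1 + C c * X ^ 2) (n : ℕ) :
    comp (a ^ n)⁻¹ (X * b⁻¹) = b ^ n := by
  have hg : constantCoeff (X * b⁻¹) = 0 := by simp
  rw [comp_inv hg (by simp [ha0]), ← compAlgHom_apply hg, map_pow, compAlgHom_apply,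
    comp_X_mul_inv_eq_inv ha0 ha hb0 hb, PowerSeries.inv_eq_iff_mul_eq_one (by simp [hb0]),
    ← mul_pow, PowerSeries.mul_inv_cancel _ (by simp [hb0]), one_pow]

theorem comp_X_mul_inv_X_mul_inv (ha0 : constantCoeff a = 1) (ha : a ^ 2 = 1 - C c * X ^ 2)
    (hb0 : constantCoeff b = 1) (hb : b ^ 2 = 1 + C c * X ^ 2) :
    comp (X * a⁻¹) (X * b⁻¹) = X := by
  have hg : constantCoeff (X * b⁻¹) = 0 := by simp
  rw [← compAlgHom_apply hg, map_mul, compAlgHom_X, compAlgHom_apply, ← pow_one a,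
    comp_inv_pow_X_mul_inv ha0 ha hb0 hb, pow_one, mul_assoc,
    PowerSeries.inv_mul_cancel _ (by simp [hb0]), mul_one]

theorem rmul_inv_pow_X_mul_inv (ha0 : constantCoeff a = 1) (ha : a ^ 2 = 1 - C c * X ^ 2)
    (hb0 : constantCoeff b = 1) (hb : b ^ 2 = 1 + C c * X ^ 2) (n : ℕ) :
    rmul ((b ^ n)⁻¹, X * b⁻¹) ((a ^ n)⁻¹, X * a⁻¹) = (1, X) := by
  rw [rmul, comp_inv_pow_X_mul_inv ha0 ha hb0 hb, comp_X_mul_inv_X_mul_inv ha0 ha hb0 hb,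
    PowerSeries.inv_mul_cancel _ (by simp [hb0])]

end Riordan

open Riordan in
/-- (1/(1-4x^2)^{3/2}, x/√(1-4x^2)) is a quasi-involution: its inverse is
(1/(1+4x^2)^{3/2}, x/√(1+4x^2)); equivalently, the compositional inverse of
x/√(1-4x^2) is x/√(1+4x^2). -/
theorem quasi_involution_three_halves (s t : ℚ⟦X⟧)
    (hs0 : PowerSeries.constantCoeff s = 1) (hs : s ^ 2 = 1 - 4 * X ^ 2)
    (ht0 : PowerSeries.constantCoeff t = 1) (ht : t ^ 2 = 1 + 4 * X ^ 2) :
    rmul (((s ^ 3 : ℚ⟦X⟧)⁻¹, X * s⁻¹)) (((t ^ 3)⁻¹, X * t⁻¹)) = (1, X) ∧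
    rmul (((t ^ 3 : ℚ⟦X⟧)⁻¹, X * t⁻¹)) (((s ^ 3)⁻¹, X * s⁻¹)) = (1, X) ∧
    comp (X * s⁻¹) (X * t⁻¹) = X ∧ comp (X * t⁻¹) (X * s⁻¹) = X := by
  have h4 : (4 : ℚ⟦X⟧) = C 4 := (map_ofNat C 4).symm
  have hs4 : s ^ 2 = 1 - C 4 * X ^ 2 := h4 ▸ hs
  have ht4 : t ^ 2 = 1 + C 4 * X ^ 2 := h4 ▸ ht
  have hs4neg : s ^ 2 = 1 + C (-4) * X ^ 2 := by rw [hs4, map_neg]; ring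
  have ht4neg : t ^ 2 = 1 - C (-4) * X ^ 2 := by rw [ht4, map_neg]; ring
  exact ⟨rmul_inv_pow_X_mul_inv ht0 ht4neg hs0 hs4neg 3, rmul_inv_pow_X_mul_inv hs0 hs4 ht0 ht4 3,
    comp_X_mul_inv_X_mul_inv hs0 hs4 ht0 ht4, comp_X_mul_inv_X_mul_inv ht0 ht4neg hs0 hs4neg⟩
end
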